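/- In normal-play Vertex Geography on an undirected graph G with token on vertex u (Fraenkel–Scheinerman–Ullman): the position (G,u) is a first-player win if and only if every maximum matching of G covers u. Equivalently, (G,u) is a P-position if and only if there exists a maximum matching of G missing u. -/
import Mathlib


universe u
mutual
  inductive GNormalWin {α : Type u} (moves : α → α → Prop) : α → Prop
    | step {p q : α} : moves p q → GNormalLose moves q → GNormalWin moves p
  inductive GNormalLose {α : Type u} (moves : α → α → Prop) : α → Prop
    | intro {p : α} : (∀ q, moves p q → GNormalWin moves q) → GNormalLose moves p
end

mutual
  inductive GMisereWin {α : Type u} (moves : α → α → Prop) : α → Prop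
    | terminal {p : α} : (∀ q, ¬ moves p q) → GMisereWin moves p
    | step {p q : α} : moves p q → GMisereLose moves q → GMisereWin moves p
  inductive GMisereLose {α : Type u} (moves : α → α → Prop) : α → Prop
    | intro {p q₀ : α} : moves p q₀ → (∀ q, moves p q → GMisereWin moves q) → GMisereLose moves p
end

def nimMove {V : Type u} (adj : V → V → Prop) (p q : V × (V → ℕ)) : Prop :=
  adj p.1 q.1 ∧ q.2 p.1 < p.2 p.1 ∧ ∀ v, v ≠ p.1 → q.2 v = p.2 v

mutual
  inductive NimRMWin {V : Type u} (adj : V → V → Prop) : V × (V → ℕ) → Prop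
    | zero {p} : p.2 p.1 = 0 → NimRMWin adj p
    | step {p q} : nimMove adj p q → NimRMLose adj q → NimRMWin adj p
  inductive NimRMLose {V : Type u} (adj : V → V → Prop) : V × (V → ℕ) → Prop
    | intro {p} : p.2 p.1 ≠ 0 → (∀ q, nimMove adj p q → NimRMWin adj q) → NimRMLose adj p
end

def vgMove {V : Type u} (A : V → V → Prop) (p q : Set V × V) : Prop :=
  A p.2 q.2 ∧ q.2 ∈ p.1 ∧ q.2 ≠ p.2 ∧ q.1 = p.1 \ {p.2}

def addOut {V : Type u} (A : V → V → Prop) : V ⊕ V → V ⊕ V → Prop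
  | .inl a, .inl b => A a b
  | .inl a, .inr b => a = b
  | _, _ => False

def MaxMatching {V : Type u} (G : SimpleGraph V) (M : G.Subgraph) : Prop :=
  M.IsMatching ∧ ∀ N : G.Subgraph, N.IsMatching → N.edgeSet.ncard ≤ M.edgeSet.ncard

section Aux

variable {V : Type} [Fintype V] {G : SimpleGraph V}

/-- A matching constrained to the vertex set `S`, maximum among those. -/
def RelMax (G : SimpleGraph V) (S : Set V) (M : G.Subgraph) : Prop :=
  M.IsMatching ∧ M.verts ⊆ S ∧
    ∀ N : G.Subgraph, N.IsMatching → N.verts ⊆ S → N.edgeSet.ncard ≤ M.edgeSet.ncard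

lemma relMax_exists (G : SimpleGraph V) (S : Set V) : ∃ M, RelMax G S M := by
  classical
  set T : Set ℕ :=
    {n | ∃ N : G.Subgraph, N.IsMatching ∧ N.verts ⊆ S ∧ N.edgeSet.ncard = n} with hT
  have hne : T.Nonempty := by
    refine ⟨0, ⊥, ?_, by simp, by simp⟩
    intro v hv
    simp only [SimpleGraph.Subgraph.verts_bot, Set.mem_empty_iff_false] at hv
  have hbdd : BddAbove T := by
    refine ⟨(Set.univ : Set (Sym2 V)).ncard, ?_⟩
    rintro n ⟨N, -, -, rfl⟩
    exact Set.ncard_le_ncard (Set.subset_univ _) (Set.toFinite _)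
  obtain ⟨M, hM1, hM2, hM3⟩ := Nat.sSup_mem hne hbdd
  exact ⟨M, hM1, hM2, fun N hN hNS => hM3 ▸ le_csSup hbdd ⟨N, hN, hNS, rfl⟩⟩

lemma unique_partner {M : G.Subgraph} (hM : M.IsMatching) {a b c : V}
    (hab : M.Adj a b) (hac : M.Adj a c) : b = c := by
  obtain ⟨w, -, hw⟩ := hM (M.edge_vert hab)
  rw [hw b hab, hw c hac]

lemma not_endpoint {M : G.Subgraph} (hM : M.IsMatching) {u v a b : V}
    (huv : M.Adj u v) (hab : M.Adj a b) (hne : s(a, b) ≠ s(u, v)) : a ≠ u ∧ a ≠ v := by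
  constructor
  · rintro rfl
    exact hne (by rw [unique_partner hM hab huv])
  · rintro rfl
    have hb : b = u := unique_partner hM hab huv.symm
    subst hb
    exact hne Sym2.eq_swap

lemma deletePair_isMatching {M : G.Subgraph} (hM : M.IsMatching) {u v : V}
    (huv : M.Adj u v) : (M.deleteVerts {u, v}).IsMatching := by
  intro w hw
  rw [SimpleGraph.Subgraph.deleteVerts_verts] at hw
  obtain ⟨hwV, hwuv⟩ := hw
  simp only [Set.mem_insert_iff, Set.mem_singleton_iff, not_or] at hwuv
  obtain ⟨x, hx, hux⟩ := hM hwV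
  have hxu : x ≠ u := by
    rintro rfl
    exact hwuv.2 (unique_partner hM hx.symm huv)
  have hxv : x ≠ v := by
    rintro rfl
    exact hwuv.1 (unique_partner hM hx.symm huv.symm)
  refine ⟨x, ?_, ?_⟩
  · show (M.deleteVerts {u, v}).Adj w x
    rw [SimpleGraph.Subgraph.deleteVerts_adj]
    refine ⟨hwV, ?_, M.edge_vert hx.symm, ?_, hx⟩
    · simp only [Set.mem_insert_iff, Set.mem_singleton_iff, not_or]
      exact hwuv
    · simp only [Set.mem_insert_iff, Set.mem_singleton_iff, not_or]
      exact ⟨hxu, hxv⟩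
  · intro y hy
    simp only [SimpleGraph.Subgraph.deleteVerts_adj] at hy
    exact hux y hy.2.2.2.2

lemma deletePair_edgeSet {M : G.Subgraph} (hM : M.IsMatching) {u v : V}
    (huv : M.Adj u v) :
    (M.deleteVerts {u, v}).edgeSet = M.edgeSet \ {s(u, v)} := by
  ext e
  refine Sym2.inductionOn e fun a b => ?_
  simp only [Set.mem_diff, SimpleGraph.Subgraph.mem_edgeSet,
    SimpleGraph.Subgraph.deleteVerts_adj, Set.mem_singleton_iff,
    Set.mem_insert_iff, not_or]
  constructor
  · rintro ⟨-, ⟨hau, hav⟩, -, -, hab⟩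
    refine ⟨hab, fun he => ?_⟩
    rw [Sym2.eq_iff] at he
    rcases he with ⟨rfl, rfl⟩ | ⟨rfl, rfl⟩
    · exact hau rfl
    · exact hav rfl
  · rintro ⟨hab, hne⟩
    have h1 := not_endpoint hM huv hab hne
    have h2 := not_endpoint hM huv hab.symm (fun h => hne (Sym2.eq_swap.trans h))
    exact ⟨M.edge_vert hab, h1, M.edge_vert hab.symm, h2, hab⟩

/-- Augmenting step: if `M` is maximum among matchings inside `S`, `u ∉ M.verts`,
and `u v` is an edge with `v ∈ S`, then every maximum matching of `S \ {u}` covers `v`. -/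
lemma augment_covers {S : Set V} {M : G.Subgraph} (hM : RelMax G S M) {u v : V}
    (huM : u ∉ M.verts) (hadj : G.Adj u v) (hvS : v ∈ S) (huS : u ∈ S)
    {N : G.Subgraph} (hN : RelMax G (S \ {u}) N) : v ∈ N.verts := by
  by_contra hvN
  obtain ⟨hMm, hMS, hMmax⟩ := hM
  obtain ⟨hNm, hNS, hNmax⟩ := hN
  have hMS' : M.verts ⊆ S \ {u} := fun x hx => ⟨hMS hx, fun h => huM (h ▸ hx)⟩
  have hMN : M.edgeSet.ncard ≤ N.edgeSet.ncard := hNmax M hMm hMS'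
  have huN : u ∉ N.verts := fun h => (hNS h).2 rfl
  set N' : G.Subgraph := N ⊔ G.subgraphOfAdj hadj with hN'
  have hN'm : N'.IsMatching := by
    refine hNm.sup (SimpleGraph.Subgraph.IsMatching.subgraphOfAdj hadj) ?_
    rw [hNm.support_eq_verts, SimpleGraph.support_subgraphOfAdj]
    rw [Set.disjoint_right]
    rintro x (rfl | rfl)
    · exact huN
    · exact hvN
  have hN'S : N'.verts ⊆ S := by
    intro x hx
    rcases hx with hx | hx
    · exact (hNS hx).1
    · rcases hx with rfl | rfl
      · exact huS
      · exact hvS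
  have hcard : N'.edgeSet.ncard = N.edgeSet.ncard + 1 := by
    have hsuv : s(u, v) ∉ N.edgeSet := fun h => huN (N.edge_vert h)
    rw [hN', SimpleGraph.Subgraph.edgeSet_sup, SimpleGraph.edgeSet_subgraphOfAdj,
      Set.union_singleton, Set.ncard_insert_of_notMem hsuv (Set.toFinite _)]
  have := hMmax N' hN'm hN'S
  omega

lemma vg_main (G : SimpleGraph V) (n : ℕ) : ∀ (S : Set V) (u : V), S.ncard = n → u ∈ S →
    ((∀ M, RelMax G S M → u ∈ M.verts) → GNormalWin (vgMove G.Adj) (S, u)) ∧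
    ((∃ M, RelMax G S M ∧ u ∉ M.verts) → GNormalLose (vgMove G.Adj) (S, u)) := by
  induction n using Nat.strong_induction_on with
  | _ n IH =>
  intro S u hn huS
  have hdec : (S \ {u}).ncard < n :=
    hn ▸ Set.ncard_diff_singleton_lt_of_mem huS (Set.toFinite S)
  constructor
  · -- every maximum matching covers u ⇒ first player wins
    intro hall
    obtain ⟨M, hM⟩ := relMax_exists G S
    have huM : u ∈ M.verts := hall M hM
    obtain ⟨hMm, hMS, hMmax⟩ := hM
    obtain ⟨v, huv, -⟩ := hMm huM
    have hGadj : G.Adj u v := M.adj_sub huv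
    have hvM : v ∈ M.verts := M.edge_vert huv.symm
    have hvS : v ∈ S := hMS hvM
    have hvu : v ≠ u := hGadj.ne'
    refine GNormalWin.step (q := (S \ {u}, v)) ⟨hGadj, hvS, hvu, rfl⟩ ?_
    refine (IH _ hdec (S \ {u}) v rfl ⟨hvS, hvu⟩).2 ?_
    refine ⟨M.deleteVerts {u, v}, ⟨deletePair_isMatching hMm huv, ?_, ?_⟩, ?_⟩
    · rw [SimpleGraph.Subgraph.deleteVerts_verts]
      rintro x ⟨hxM, hxuv⟩
      simp only [Set.mem_insert_iff, Set.mem_singleton_iff, not_or] at hxuv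
      exact ⟨hMS hxM, hxuv.1⟩
    · intro N hNm hNS
      have hNS' : N.verts ⊆ S := fun x hx => (hNS hx).1
      have hle : N.edgeSet.ncard ≤ M.edgeSet.ncard := hMmax N hNm hNS'
      have hne : N.edgeSet.ncard ≠ M.edgeSet.ncard := by
        intro heq
        have : RelMax G S N := ⟨hNm, hNS', fun N' hN' hN'S => heq ▸ hMmax N' hN' hN'S⟩
        exact (hNS (hall N this)).2 rfl
      have hcard : (M.deleteVerts {u, v}).edgeSet.ncard + 1 = M.edgeSet.ncard := by
        rw [deletePair_edgeSet hMm huv]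
        exact Set.ncard_diff_singleton_add_one (SimpleGraph.Subgraph.mem_edgeSet.mpr huv)
          (Set.toFinite _)
      omega
    · rw [SimpleGraph.Subgraph.deleteVerts_verts]
      rintro ⟨-, hv⟩
      exact hv (by simp)
  · -- some maximum matching misses u ⇒ first player loses
    rintro ⟨M, hM, huM⟩
    refine GNormalLose.intro ?_
    rintro ⟨T, v⟩ ⟨hadj, hvS, hvu, hT⟩
    simp only at hadj hvS hvu hT
    subst hT
    refine (IH _ hdec (S \ {u}) v rfl ⟨hvS, hvu⟩).1 ?_
    intro N hN
    exact augment_covers hM huM hadj hvS huS hN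

lemma vg_excl (G : SimpleGraph V) (n : ℕ) : ∀ (S : Set V) (u : V), S.ncard = n → u ∈ S →
    GNormalWin (vgMove G.Adj) (S, u) → GNormalLose (vgMove G.Adj) (S, u) → False := by
  induction n using Nat.strong_induction_on with
  | _ n IH =>
  intro S u hn huS hw hl
  have hdec : (S \ {u}).ncard < n :=
    hn ▸ Set.ncard_diff_singleton_lt_of_mem huS (Set.toFinite S)
  cases hw with
  | @step _ q hmv hlq =>
    cases hl with
    | intro h =>
      have hwq := h q hmv
      obtain ⟨T, v⟩ := q
      obtain ⟨-, hvS, hvu, hT⟩ := hmv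
      simp only at hvS hvu hT
      subst hT
      exact IH _ hdec (S \ {u}) v rfl ⟨hvS, hvu⟩ hwq hlq

end Aux

/-- Fraenkel–Scheinerman–Ullman: normal-play Vertex Geography on an undirected graph `G`
with the token on `u` is a first-player win iff every maximum matching of `G` covers `u`;
equivalently it is a `P`-position iff some maximum matching misses `u`. -/
theorem stmt19 {V : Type} [Fintype V] (G : SimpleGraph V) (u : V) :
    (GNormalWin (vgMove G.Adj) (Set.univ, u) ↔
      ∀ M : G.Subgraph, MaxMatching G M → u ∈ M.verts) ∧
    (GNormalLose (vgMove G.Adj) (Set.univ, u) ↔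
      ∃ M : G.Subgraph, MaxMatching G M ∧ u ∉ M.verts) := by
  classical
  have hrel : ∀ M : G.Subgraph, RelMax G Set.univ M ↔ MaxMatching G M := by
    intro M
    constructor
    · rintro ⟨h1, -, h3⟩
      exact ⟨h1, fun N hN => h3 N hN (Set.subset_univ _)⟩
    · rintro ⟨h1, h3⟩
      exact ⟨h1, Set.subset_univ _, fun N hN _ => h3 N hN⟩
  have hmain := vg_main G (Set.univ : Set V).ncard Set.univ u rfl (Set.mem_univ u)
  have hexcl := vg_excl G (Set.univ : Set V).ncard Set.univ u rfl (Set.mem_univ u)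
  constructor
  · constructor
    · intro hw M hMmax
      by_contra hu
      exact hexcl hw (hmain.2 ⟨M, (hrel M).2 hMmax, hu⟩)
    · intro hall
      exact hmain.1 fun M hM => hall M ((hrel M).1 hM)
  · constructor
    · intro hl
      by_contra h
      push_neg at h
      exact hexcl (hmain.1 fun M hM => h M ((hrel M).1 hM)) hl
    · rintro ⟨M, hM, hu⟩
      exact hmain.2 ⟨M, (hrel M).2 hM, hu⟩
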